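/- Let b > 0 and let Z₁ and Z₂ be independent real random variables, where Z₁ has the Laplace distribution with scale 2b and Z₂ has the Laplace distribution with scale b. Then for every constant C > 0, P(Z₁ ≤ Z₂ − C) = (2/3)·exp(−C/(2b)) − (1/6)·exp(−C/b); in particular, P(Z₁ ≤ Z₂ − C) ≤ (2/3)·exp(−C/(2b)). -/

import Mathlib

/-!
Conditioning on `Z₁ = x`, independence gives `P(Z₁ ≤ Z₂ - C) = ∫ f(x) P(Z₂ ≥ x + C) dx`,
where `f` is the Laplace density of scale `2b` and `P(Z₂ ≥ t)` is `1 - exp(t/b)/2` for `t ≤ 0`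
and `exp(-t/b)/2` for `t > 0`. On each of `x ≤ -C`, `-C < x ≤ 0` and `0 < x` the integrand is a
combination of exponentials, whose integrals are `(5/12) exp(-C/2b)`,
`(1/4) (exp(-C/2b) - exp(-C/b))` and `(1/12) exp(-C/b)`; these add up to the claimed value.
-/

open MeasureTheory ProbabilityTheory Real

/-- A real random variable `Z` has the Laplace distribution with scale `b > 0` (with respect to
the probability measure `P`) if it is measurable and its law has density
`x ↦ (1/(2b)) · exp(−|x|/b)` with respect to Lebesgue measure. -/
def HasLaplaceLaw {Ω : Type*} [MeasurableSpace Ω] (P : Measure Ω) (Z : Ω → ℝ) (b : ℝ) : Prop :=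
  Measurable Z ∧
    P.map Z = volume.withDensity (fun x => ENNReal.ofReal ((1 / (2 * b)) * Real.exp (-|x| / b)))

open Set

theorem integral_Ioc_exp_mul {a : ℝ} (ha : a ≠ 0) {c d : ℝ} (hcd : c ≤ d) :
    ∫ x in Ioc c d, exp (a * x) = (exp (a * d) - exp (a * c)) / a := by
  rw [← intervalIntegral.integral_of_le hcd, intervalIntegral.integral_comp_mul_left exp ha,
    integral_exp, smul_eq_mul, inv_mul_eq_div]

theorem integral_Iic_exp_mul_add {a : ℝ} (ha : 0 < a) (c d : ℝ) :
    ∫ x in Iic c, exp (a * x + d) = exp (a * c + d) / a := by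
  simp_rw [exp_add, integral_mul_const, integral_exp_mul_Iic ha]
  ring

theorem integral_Ioi_exp_mul_add {a : ℝ} (ha : a < 0) (c d : ℝ) :
    ∫ x in Ioi c, exp (a * x + d) = -exp (a * c + d) / a := by
  simp_rw [exp_add, integral_mul_const, integral_exp_mul_Ioi ha]
  ring

theorem integral_Ioc_exp_mul_add {a : ℝ} (ha : a ≠ 0) {c c' : ℝ} (hc : c ≤ c') (d : ℝ) :
    ∫ x in Ioc c c', exp (a * x + d) = (exp (a * c' + d) - exp (a * c + d)) / a := by
  simp_rw [exp_add, integral_mul_const, integral_Ioc_exp_mul ha hc]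
  ring

theorem measure_le_sub_eq_lintegral {Ω : Type*} [MeasurableSpace Ω] {P : Measure Ω}
    [IsFiniteMeasure P] {X Y : Ω → ℝ} (hX : AEMeasurable X P) (hY : AEMeasurable Y P)
    (hXY : IndepFun X Y P) (C : ℝ) :
    P {ω | X ω ≤ Y ω - C} = ∫⁻ x, P.map Y (Ici (x + C)) ∂P.map X := by
  have hs : MeasurableSet {p : ℝ × ℝ | p.1 ≤ p.2 - C} :=
    measurableSet_le measurable_fst (measurable_snd.sub_const C)
  have hslice (x : ℝ) : Prod.mk x ⁻¹' {p : ℝ × ℝ | p.1 ≤ p.2 - C} = Ici (x + C) := by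
    ext y; simp [le_sub_iff_add_le]
  calc P {ω | X ω ≤ Y ω - C} = P.map (fun ω => (X ω, Y ω)) {p | p.1 ≤ p.2 - C} :=
        (Measure.map_apply_of_aemeasurable (hX.prodMk hY) hs).symm
    _ = ((P.map X).prod (P.map Y)) {p | p.1 ≤ p.2 - C} := by
        rw [(indepFun_iff_map_prod_eq_prod_map_map hX hY).1 hXY]
    _ = ∫⁻ x, P.map Y (Ici (x + C)) ∂P.map X := by
        simp_rw [Measure.prod_apply hs, hslice]

noncomputable def laplacePDF (b x : ℝ) : ℝ := 1 / (2 * b) * exp (-|x| / b)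

noncomputable def laplaceMeasure (b : ℝ) : Measure ℝ :=
  volume.withDensity fun x => ENNReal.ofReal (laplacePDF b x)

noncomputable def laplaceTail (b t : ℝ) : ℝ :=
  if t ≤ 0 then 1 - exp (t / b) / 2 else exp (-t / b) / 2

theorem HasLaplaceLaw.map_eq {Ω : Type*} [MeasurableSpace Ω] {P : Measure Ω} {Z : Ω → ℝ}
    {b : ℝ} (h : HasLaplaceLaw P Z b) : P.map Z = laplaceMeasure b :=
  h.2

section Laplace

variable {b : ℝ}

theorem laplacePDF_nonneg (hb : 0 < b) (x : ℝ) : 0 ≤ laplacePDF b x := by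
  unfold laplacePDF; positivity

theorem laplacePDF_of_nonneg {x : ℝ} (hx : 0 ≤ x) :
    laplacePDF b x = exp (-b⁻¹ * x) / (2 * b) := by
  rw [laplacePDF, abs_of_nonneg hx]; ring_nf

theorem laplacePDF_of_nonpos {x : ℝ} (hx : x ≤ 0) :
    laplacePDF b x = exp (b⁻¹ * x) / (2 * b) := by
  rw [laplacePDF, abs_of_nonpos hx]; ring_nf

theorem setIntegral_Ioi_laplacePDF_of_nonneg (hb : 0 < b) {t : ℝ} (ht : 0 ≤ t) :
    ∫ x in Ioi t, laplacePDF b x = exp (-t / b) / 2 := by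
  rw [setIntegral_congr_fun measurableSet_Ioi fun x hx => laplacePDF_of_nonneg (ht.trans hx.le),
    integral_div, integral_exp_mul_Ioi (by simpa using hb) t]
  field_simp

theorem integral_laplacePDF (hb : 0 < b) : ∫ x, laplacePDF b x = 1 := by
  refine (integral_comp_abs (f := fun y => 1 / (2 * b) * exp (-y / b))).trans ?_
  rw [setIntegral_congr_fun (g := laplacePDF b) measurableSet_Ioi fun x (hx : 0 < x) => by
      rw [laplacePDF, abs_of_pos hx],
    setIntegral_Ioi_laplacePDF_of_nonneg hb le_rfl]
  simp

-- A function with nonzero integral is integrable, since `∫` is `0` off integrable functions.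
theorem integrable_laplacePDF (hb : 0 < b) : Integrable (laplacePDF b) :=
  Integrable.of_integral_ne_zero (by simp [integral_laplacePDF hb])

theorem setIntegral_Ici_laplacePDF (hb : 0 < b) (t : ℝ) :
    ∫ x in Ici t, laplacePDF b x = laplaceTail b t := by
  rw [integral_Ici_eq_integral_Ioi, laplaceTail]
  split_ifs with ht
  · rw [← Ioc_union_Ioi_eq_Ioi ht, setIntegral_union Ioc_disjoint_Ioi_same measurableSet_Ioi
      (integrable_laplacePDF hb).integrableOn (integrable_laplacePDF hb).integrableOn,
      setIntegral_Ioi_laplacePDF_of_nonneg hb le_rfl,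
      setIntegral_congr_fun measurableSet_Ioc fun x hx => laplacePDF_of_nonpos hx.2,
      integral_div, integral_Ioc_exp_mul (by positivity) ht]
    simp only [neg_zero, zero_div, mul_zero, exp_zero]
    field_simp
    ring_nf
  · exact setIntegral_Ioi_laplacePDF_of_nonneg hb (le_of_not_ge ht)

theorem laplaceMeasure_Ici (hb : 0 < b) (t : ℝ) :
    laplaceMeasure b (Ici t) = ENNReal.ofReal (laplaceTail b t) := by
  rw [laplaceMeasure, withDensity_apply _ measurableSet_Ici, ← setIntegral_Ici_laplacePDF hb,
    ofReal_integral_eq_lintegral_ofReal (integrable_laplacePDF hb).integrableOn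
      (ae_of_all _ (laplacePDF_nonneg hb))]

@[fun_prop]
theorem measurable_laplacePDF : Measurable (laplacePDF b) := by
  unfold laplacePDF; fun_prop

@[fun_prop]
theorem measurable_laplaceTail : Measurable (laplaceTail b) :=
  Measurable.ite measurableSet_Iic (by fun_prop) (by fun_prop)

theorem laplaceTail_mem_Icc (hb : 0 < b) (t : ℝ) : laplaceTail b t ∈ Icc 0 1 := by
  rw [laplaceTail]
  split_ifs with ht
  · have h₀ := exp_pos (t / b)
    have h₁ : exp (t / b) ≤ 1 := exp_le_one_iff.2 (div_nonpos_of_nonpos_of_nonneg ht hb.le)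
    exact ⟨by linarith, by linarith⟩
  · have h₀ := exp_pos (-t / b)
    have h₁ : exp (-t / b) ≤ 1 :=
      exp_le_one_iff.2 (div_nonpos_of_nonpos_of_nonneg (by linarith) hb.le)
    exact ⟨by linarith, by linarith⟩

end Laplace

section Convolution

variable {b C : ℝ}

theorem setIntegral_Iic_laplacePDF_mul_laplaceTail (hb : 0 < b) (hC : 0 ≤ C) :
    ∫ x in Iic (-C), laplacePDF (2 * b) x * laplaceTail b (x + C) =
      5 / 12 * exp (-C / (2 * b)) := by
  have hF : EqOn (fun x => laplacePDF (2 * b) x * laplaceTail b (x + C))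
      (fun x => exp ((2 * b)⁻¹ * x) / (4 * b) - exp (3 * (2 * b)⁻¹ * x + C / b) / (8 * b))
      (Iic (-C)) := by
    intro x (hx : x ≤ -C)
    dsimp only
    rw [laplacePDF_of_nonpos (by linarith), laplaceTail, if_pos (by linarith),
      show 3 * (2 * b)⁻¹ * x + C / b = (2 * b)⁻¹ * x + (x + C) / b by ring, exp_add]
    ring
  rw [setIntegral_congr_fun measurableSet_Iic hF, integral_sub, integral_div, integral_div,
    integral_exp_mul_Iic (by positivity), integral_Iic_exp_mul_add (by positivity)]
  · ring_nf
    field_simp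
  · exact (integrableOn_exp_mul_Iic (by positivity) _).div_const _
  · simpa only [exp_add] using
      ((integrableOn_exp_mul_Iic (by positivity) _).mul_const (exp (C / b))).div_const (8 * b)

theorem setIntegral_Ioc_laplacePDF_mul_laplaceTail (hb : 0 < b) (hC : 0 ≤ C) :
    ∫ x in Ioc (-C) 0, laplacePDF (2 * b) x * laplaceTail b (x + C) =
      1 / 4 * exp (-C / (2 * b)) - 1 / 4 * exp (-C / b) := by
  have hF : EqOn (fun x => laplacePDF (2 * b) x * laplaceTail b (x + C))
      (fun x => exp (-(2 * b)⁻¹ * x + -C / b) / (8 * b)) (Ioc (-C) 0) := by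
    intro x ⟨hx₁, hx₂⟩
    dsimp only
    rw [laplacePDF_of_nonpos hx₂, laplaceTail, if_neg (by linarith),
      show -(2 * b)⁻¹ * x + -C / b = (2 * b)⁻¹ * x + -(x + C) / b by ring, exp_add]
    ring
  rw [setIntegral_congr_fun measurableSet_Ioc hF, integral_div,
    integral_Ioc_exp_mul_add (by simpa using hb.ne') (by linarith)]
  ring_nf
  field_simp

theorem setIntegral_Ioi_laplacePDF_mul_laplaceTail (hb : 0 < b) (hC : 0 ≤ C) :
    ∫ x in Ioi 0, laplacePDF (2 * b) x * laplaceTail b (x + C) = 1 / 12 * exp (-C / b) := by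
  have hF : EqOn (fun x => laplacePDF (2 * b) x * laplaceTail b (x + C))
      (fun x => exp (-(3 * (2 * b)⁻¹) * x + -C / b) / (8 * b)) (Ioi 0) := by
    intro x (hx : 0 < x)
    dsimp only
    rw [laplacePDF_of_nonneg hx.le, laplaceTail, if_neg (by linarith),
      show -(3 * (2 * b)⁻¹) * x + -C / b = -(2 * b)⁻¹ * x + -(x + C) / b by ring, exp_add]
    ring
  rw [setIntegral_congr_fun measurableSet_Ioi hF, integral_div,
    integral_Ioi_exp_mul_add (by simpa using hb) 0]
  ring_nf
  field_simp

theorem integrable_laplacePDF_mul_laplaceTail (hb : 0 < b) :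
    Integrable fun x => laplacePDF (2 * b) x * laplaceTail b (x + C) :=
  (integrable_laplacePDF (by positivity)).mul_bdd
    (measurable_laplaceTail.comp (measurable_add_const C)).aestronglyMeasurable
    (ae_of_all _ fun x => by
      obtain ⟨h₀, h₁⟩ := laplaceTail_mem_Icc hb (x + C)
      rwa [Real.norm_of_nonneg h₀])

theorem integral_laplacePDF_mul_laplaceTail (hb : 0 < b) (hC : 0 ≤ C) :
    ∫ x, laplacePDF (2 * b) x * laplaceTail b (x + C) =
      2 / 3 * exp (-C / (2 * b)) - 1 / 6 * exp (-C / b) := by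
  have hF := integrable_laplacePDF_mul_laplaceTail (C := C) hb
  rw [← intervalIntegral.integral_Iic_add_Ioi hF.integrableOn hF.integrableOn,
    ← Ioc_union_Ioi_eq_Ioi (neg_nonpos.2 hC),
    setIntegral_union Ioc_disjoint_Ioi_same measurableSet_Ioi hF.integrableOn hF.integrableOn,
    setIntegral_Iic_laplacePDF_mul_laplaceTail hb hC,
    setIntegral_Ioc_laplacePDF_mul_laplaceTail hb hC,
    setIntegral_Ioi_laplacePDF_mul_laplaceTail hb hC]
  ring

theorem lintegral_laplaceMeasure_Ici_add (hb : 0 < b) (hC : 0 ≤ C) :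
    ∫⁻ x, laplaceMeasure b (Ici (x + C)) ∂laplaceMeasure (2 * b) =
      ENNReal.ofReal (2 / 3 * exp (-C / (2 * b)) - 1 / 6 * exp (-C / b)) := by
  have hpdf := laplacePDF_nonneg (b := 2 * b) (by positivity)
  simp_rw [laplaceMeasure_Ici hb]
  rw [laplaceMeasure, lintegral_withDensity_eq_lintegral_mul _ (by fun_prop) (by fun_prop)]
  simp_rw [Pi.mul_apply, ← ENNReal.ofReal_mul (hpdf _)]
  rw [← ofReal_integral_eq_lintegral_ofReal (integrable_laplacePDF_mul_laplaceTail hb)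
    (ae_of_all _ fun x => mul_nonneg (hpdf x) (laplaceTail_mem_Icc hb _).1),
    integral_laplacePDF_mul_laplaceTail hb hC]

end Convolution

theorem laplace_le_diff_prob {Ω : Type*} [MeasurableSpace Ω] (P : Measure Ω)
    [IsProbabilityMeasure P] (b : ℝ) (hb : 0 < b) (Z₁ Z₂ : Ω → ℝ)
    (h₁ : HasLaplaceLaw P Z₁ (2 * b)) (h₂ : HasLaplaceLaw P Z₂ b)
    (hind : IndepFun Z₁ Z₂ P) (C : ℝ) (hC : 0 < C) :
    P {ω | Z₁ ω ≤ Z₂ ω - C} =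
        ENNReal.ofReal
          ((2 / 3) * Real.exp (-C / (2 * b)) - (1 / 6) * Real.exp (-C / b)) ∧
      P {ω | Z₁ ω ≤ Z₂ ω - C} ≤ ENNReal.ofReal ((2 / 3) * Real.exp (-C / (2 * b))) := by
  have hP := measure_le_sub_eq_lintegral h₁.1.aemeasurable h₂.1.aemeasurable hind C
  rw [h₁.map_eq, h₂.map_eq, lintegral_laplaceMeasure_Ici_add hb hC.le] at hP
  refine ⟨hP, hP ▸ ENNReal.ofReal_le_ofReal ?_⟩
  linarith [exp_pos (-C / b)]
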